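/- arXiv:2305.06749 — 6 statements merged into one kernel-verified Lean document; each statement's English description precedes it below -/
import Mathlib

section
/- Let γ ∈ [0,2] and let p, q ≥ 1 be conjugate exponents (1/p + 1/q = 1). For all v, v_* ∈ ℝ³, I, I_* ∈ [0,∞), σ ∈ 𝕊², r ∈ (0,1], R ∈ [0,1] such that (v−v_*)·σ ≤ 0, one has (E/m)^{γ/2} ≤ (√2/s̄_{ij})^{γ/q} · r^{−γ/(2q)} · ⟨v',I'⟩_i^{γ/q} · ⟨v,I⟩_i^{γ} · ⟨v_*,I_*⟩_j^{γ/p}. -/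
open MeasureTheory Real Set
open scoped ENNReal Classical

noncomputable section

/-- `ℝ³` as a Euclidean space. -/
abbrev E3 := EuclideanSpace ℝ (Fin 3)

/-- The surface measure on the unit sphere `𝕊² ⊂ ℝ³` (total mass `4π`). -/
def sphM : Measure (Metric.sphere (0 : E3) 1) := (volume : Measure E3).toSphere

/-- The phase-space region `ℝ³ × [0,∞)`. -/
def regionVI : Set (E3 × ℝ) := {p | 0 ≤ p.2}

/-- Total energy `E = (μ/2)|v - v_*|² + I + I_*` with reduced mass `μ = m_i m_j/(m_i+m_j)`. -/
def EE (mi mj : ℝ) (v vs : E3) (I Is : ℝ) : ℝ :=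
  mi * mj / (mi + mj) / 2 * ‖v - vs‖ ^ 2 + I + Is

/-- Post-collisional velocity `v' = V + (m_j/M)√(2RE/μ) σ`. -/
def vprime (mi mj : ℝ) (v vs σ : E3) (I Is R : ℝ) : E3 :=
  (mi / (mi + mj)) • v + (mj / (mi + mj)) • vs +
    (mj / (mi + mj) * Real.sqrt (2 * R * EE mi mj v vs I Is / (mi * mj / (mi + mj)))) • σ

/-- Post-collisional partner velocity `v'_* = V - (m_i/M)√(2RE/μ) σ`. -/
def vsprime (mi mj : ℝ) (v vs σ : E3) (I Is R : ℝ) : E3 :=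
  (mi / (mi + mj)) • v + (mj / (mi + mj)) • vs -
    (mi / (mi + mj) * Real.sqrt (2 * R * EE mi mj v vs I Is / (mi * mj / (mi + mj)))) • σ

/-- Post-collisional internal energy `I' = r(1-R)E`. -/
def Iprime (mi mj : ℝ) (v vs : E3) (I Is r R : ℝ) : ℝ :=
  r * (1 - R) * EE mi mj v vs I Is

/-- Post-collisional partner internal energy `I'_* = (1-r)(1-R)E`. -/
def Isprime (mi mj : ℝ) (v vs : E3) (I Is r R : ℝ) : ℝ :=
  (1 - r) * (1 - R) * EE mi mj v vs I Is

/-- Lebesgue bracket `⟨v,I⟩ = √(1 + m|v|²/(2m̄) + I/m̄)`. -/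
def brk (mi mm : ℝ) (v : E3) (I : ℝ) : ℝ :=
  Real.sqrt (1 + mi * ‖v‖ ^ 2 / (2 * mm) + I / mm)

/-- Mass-ratio parameter `s̄_{ij} = min{m_i, m_j}/(m_i + m_j)`. -/
def sbar (mi mj : ℝ) : ℝ := min mi mj / (mi + mj)

/-- The weight `d_{ij}(r,R) = r^{α_i}(1-r)^{α_j}(1-R)^{α_i+α_j+1}√R`. -/
def dij (ai aj r R : ℝ) : ℝ :=
  r ^ ai * (1 - r) ^ aj * (1 - R) ^ (ai + aj + 1) * Real.sqrt R

/-- The constant `ρ(q) = ∫_{[0,1]²} r^{-(1+γ/2)/q}(1-R)^{-1/q} d_{ij}(r,R) b̃(r,R) dr dR`. -/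
def rhoC (ai aj γ q : ℝ) (btil : ℝ → ℝ → ℝ) : ℝ≥0∞ :=
  ∫⁻ rR in Icc (0 : ℝ) 1 ×ˢ Icc (0 : ℝ) 1,
    ENNReal.ofReal (rR.1 ^ (-((1 + γ / 2) / q)) * (1 - rR.2) ^ (-(1 / q))
      * dij ai aj rR.1 rR.2 * btil rR.1 rR.2)

/-- Normalized relative velocity `û = (v - v_*)/|v - v_*|`. -/
def uhat (v vs : E3) : E3 := ‖v - vs‖⁻¹ • (v - vs)

/-- The averaging operator
`S(χ)(v,I,v_*,I_*) = ∫_{𝕊²×[0,1]²} χ(v',I') b(û·σ) r^{-γ/(2q)} d_{ij}(r,R) b̃(r,R) dr dR dσ`,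
read as `0` when `u = 0`. -/
def Sop (mi mj ai aj γ q : ℝ) (b : ℝ → ℝ) (btil : ℝ → ℝ → ℝ) (χ : E3 × ℝ → ℝ)
    (v : E3) (I : ℝ) (vs : E3) (Is : ℝ) : ℝ≥0∞ :=
  if v = vs then 0 else
    ∫⁻ σ, (∫⁻ rR in Icc (0 : ℝ) 1 ×ˢ Icc (0 : ℝ) 1,
      ENNReal.ofReal (χ (vprime mi mj v vs (σ : E3) I Is rR.2,
          Iprime mi mj v vs I Is rR.1 rR.2)
        * b (inner ℝ (uhat v vs) (σ : E3))
        * rR.1 ^ (-(γ / (2 * q))) * dij ai aj rR.1 rR.2 * btil rR.1 rR.2)) ∂sphM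

/-- The (unweighted) `L^q` norm on `ℝ³ × [0,∞)`. -/
def LqN (q : ℝ) (χ : E3 × ℝ → ℝ) : ℝ≥0∞ :=
  (∫⁻ p in regionVI, ENNReal.ofReal (χ p) ^ q) ^ (1 / q)

/-- The polynomially weighted `L^p` norm `‖φ‖_{L^p_{i,s}}`. -/
def LpW (pp s mi mm : ℝ) (φ : E3 × ℝ → ℝ) : ℝ≥0∞ :=
  (∫⁻ x in regionVI, ENNReal.ofReal (φ x * brk mi mm x.1 x.2 ^ s) ^ pp) ^ (1 / pp)

/-- The gain part `Q⁺(f,g)` of the collision operator (integrand read as `0` when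
`I' I'_* = 0`). -/
def Qgain (mi mj ai aj : ℝ)
    (B : (E3 × ℝ) × (E3 × ℝ) × Metric.sphere (0 : E3) 1 × ℝ × ℝ → ℝ)
    (f g : E3 × ℝ → ℝ) (v : E3) (I : ℝ) : ℝ≥0∞ :=
  ∫⁻ x in regionVI, ∫⁻ σ, (∫⁻ rR in Icc (0 : ℝ) 1 ×ˢ Icc (0 : ℝ) 1,
    ENNReal.ofReal (
      if Iprime mi mj v x.1 I x.2 rR.1 rR.2 * Isprime mi mj v x.1 I x.2 rR.1 rR.2 = 0 then 0
      else f (vprime mi mj v x.1 (σ : E3) I x.2 rR.2, Iprime mi mj v x.1 I x.2 rR.1 rR.2)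
        * g (vsprime mi mj v x.1 (σ : E3) I x.2 rR.2, Isprime mi mj v x.1 I x.2 rR.1 rR.2)
        * (I / Iprime mi mj v x.1 I x.2 rR.1 rR.2) ^ ai
        * (x.2 / Isprime mi mj v x.1 I x.2 rR.1 rR.2) ^ aj
        * B ((v, I), x, σ, rR.1, rR.2) * dij ai aj rR.1 rR.2)) ∂sphM
/-!
Write `(E/m)^{γ/2} = (E/m)^{γ/(2q)} (E/m)^{γ/(2p)}` and bound `E/m` in two ways.
Since `μ|v - v_*|² ≤ m_i|v|² + m_j|v_*|²`, one has `E ≤ (m_i|v|²/2 + I) + (m_j|v_*|²/2 + I_*)`,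
whence `E/m ≤ ⟨v,I⟩²⟨v_*,I_*⟩²`. In the backward case `v' - v = (m_j/M)(|u'|σ - u)` has a
component at least `(m_j/M)|u'| ≥ s̄|u'|` along `σ`, where `|u'|² = 2RE/μ`; with
`|v' - v| ≤ |v'| + |v|` this gives `s̄² R E ≤ m_i(|v'|² + |v|²)`, and adding
`s̄² I' ≤ I' = r(1-R)E` yields `s̄² r E/m ≤ 2⟨v',I'⟩²⟨v,I⟩²`.
-/

section InnerProductSpace

variable {F : Type*} [NormedAddCommGroup F] [InnerProductSpace ℝ F]

theorem mul_div_add_mul_norm_sub_sq_le {a b : ℝ} (hab : 0 < a + b) (v w : F) :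
    a * b / (a + b) * ‖v - w‖ ^ 2 ≤ a * ‖v‖ ^ 2 + b * ‖w‖ ^ 2 := by
  -- `(a + b) (a‖v‖² + b‖w‖²) - ab‖v - w‖² = ‖a v + b w‖²`
  have hcm : 0 ≤ ‖a • v + b • w‖ ^ 2 := sq_nonneg _
  rw [norm_add_sq_real, norm_smul, norm_smul, real_inner_smul_left, real_inner_smul_right,
    mul_pow, mul_pow, Real.norm_eq_abs, Real.norm_eq_abs, sq_abs, sq_abs] at hcm
  rw [div_mul_eq_mul_div, div_le_iff₀ hab, norm_sub_sq_real]
  nlinarith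

theorem le_norm_smul_sub_of_inner_nonpos {u σ : F} (hσ : ‖σ‖ = 1) (hu : inner ℝ u σ ≤ 0) (c : ℝ) :
    c ≤ ‖c • σ - u‖ := by
  have hinner : inner ℝ (c • σ - u) σ = c - inner ℝ u σ := by
    rw [inner_sub_left, real_inner_smul_left, real_inner_self_eq_norm_sq, hσ]
    ring
  have := real_inner_le_norm (c • σ - u) σ
  rw [hσ, mul_one, hinner] at this
  linarith

end InnerProductSpace

theorem rpow_add_le_mul_rpow {x A B a b : ℝ} (hx : 0 ≤ x) (hA : x ≤ A) (hB : x ≤ B)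
    (ha : 0 ≤ a) (hb : 0 ≤ b) : x ^ (a + b) ≤ A ^ a * B ^ b := by
  rw [Real.rpow_add_of_nonneg hx ha hb]
  exact mul_le_mul (Real.rpow_le_rpow hx hA ha) (Real.rpow_le_rpow hx hB hb)
    (Real.rpow_nonneg hx _) (Real.rpow_nonneg (hx.trans hA) _)

theorem sq_rpow_div_two {x : ℝ} (hx : 0 ≤ x) (t : ℝ) : (x ^ 2) ^ (t / 2) = x ^ t := by
  rw [← Real.rpow_natCast_mul hx]
  congr 1
  push_cast
  ring

section Brackets

variable {mi mj mm : ℝ}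

theorem brk_nonneg (v : E3) (I : ℝ) : 0 ≤ brk mi mm v I := Real.sqrt_nonneg _

theorem brk_sq (hmi : 0 ≤ mi) (hmm : 0 ≤ mm) (v : E3) {I : ℝ} (hI : 0 ≤ I) :
    brk mi mm v I ^ 2 = 1 + (mi * ‖v‖ ^ 2 / 2 + I) / mm := by
  rw [brk, Real.sq_sqrt (by positivity)]
  ring

theorem div_le_brk_sq_mul_brk_sq (hmi : 0 ≤ mi) (hmj : 0 ≤ mj) (hmm : 0 < mm) {v w : E3}
    {I J x : ℝ} (hI : 0 ≤ I) (hJ : 0 ≤ J)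
    (hx : x ≤ (mi * ‖v‖ ^ 2 / 2 + I) + (mj * ‖w‖ ^ 2 / 2 + J)) :
    x / mm ≤ brk mi mm v I ^ 2 * brk mj mm w J ^ 2 := by
  rw [brk_sq hmi hmm.le v hI, brk_sq hmj hmm.le w hJ]
  have ha : 0 ≤ (mi * ‖v‖ ^ 2 / 2 + I) / mm := by positivity
  have hb : 0 ≤ (mj * ‖w‖ ^ 2 / 2 + J) / mm := by positivity
  calc x / mm ≤ (mi * ‖v‖ ^ 2 / 2 + I) / mm + (mj * ‖w‖ ^ 2 / 2 + J) / mm := by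
        rw [← add_div]; gcongr
    _ ≤ _ := by nlinarith [mul_nonneg ha hb]

end Brackets

section Collision

variable {mi mj mm : ℝ} {v vs σ : E3} {I Is r R : ℝ}

theorem sbar_pos (hmi : 0 < mi) (hmj : 0 < mj) : 0 < sbar mi mj :=
  div_pos (lt_min hmi hmj) (add_pos hmi hmj)

theorem sbar_le_one (hmi : 0 < mi) (hmj : 0 ≤ mj) : sbar mi mj ≤ 1 := by
  rw [sbar, div_le_one (by linarith)]
  linarith [min_le_left mi mj]

/-- The post-collisional relative speed `|v' - v'_*| = √(2RE/μ)`. -/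
def relSpeedPrime (mi mj : ℝ) (v vs : E3) (I Is R : ℝ) : ℝ :=
  Real.sqrt (2 * R * EE mi mj v vs I Is / (mi * mj / (mi + mj)))

theorem EE_nonneg (hmi : 0 ≤ mi) (hmj : 0 ≤ mj) (hI : 0 ≤ I) (hIs : 0 ≤ Is) :
    0 ≤ EE mi mj v vs I Is := by
  unfold EE; positivity

theorem EE_le (hM : 0 < mi + mj) :
    EE mi mj v vs I Is ≤ (mi * ‖v‖ ^ 2 / 2 + I) + (mj * ‖vs‖ ^ 2 / 2 + Is) := by
  have := mul_div_add_mul_norm_sub_sq_le hM v vs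
  unfold EE
  linarith

theorem vprime_sub_self (hM : mi + mj ≠ 0) :
    vprime mi mj v vs σ I Is R - v
      = (mj / (mi + mj)) • (relSpeedPrime mi mj v vs I Is R • σ - (v - vs)) := by
  have hmi : mi / (mi + mj) = 1 - mj / (mi + mj) := by field_simp; ring
  rw [vprime, relSpeedPrime, hmi]
  module

theorem sbar_mul_relSpeedPrime_le (hmi : 0 < mi) (hmj : 0 < mj) (hσ : ‖σ‖ = 1)
    (hdir : inner ℝ (v - vs) σ ≤ 0) :
    sbar mi mj * relSpeedPrime mi mj v vs I Is R ≤ ‖vprime mi mj v vs σ I Is R - v‖ := by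
  have hM : 0 < mi + mj := by linarith
  have hs : sbar mi mj ≤ mj / (mi + mj) := by
    unfold sbar; gcongr; exact min_le_right mi mj
  rw [vprime_sub_self hM.ne', norm_smul, Real.norm_of_nonneg (by positivity)]
  exact mul_le_mul hs (le_norm_smul_sub_of_inner_nonpos hσ hdir _) (Real.sqrt_nonneg _)
    (by positivity)

theorem sbar_sq_mul_R_mul_EE_le (hmi : 0 < mi) (hmj : 0 < mj) (hI : 0 ≤ I) (hIs : 0 ≤ Is)
    (hσ : ‖σ‖ = 1) (hdir : inner ℝ (v - vs) σ ≤ 0) (hR : 0 ≤ R) :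
    sbar mi mj ^ 2 * (R * EE mi mj v vs I Is)
      ≤ mi * (‖vprime mi mj v vs σ I Is R‖ ^ 2 + ‖v‖ ^ 2) := by
  set μ := mi * mj / (mi + mj)
  set a := ‖vprime mi mj v vs σ I Is R‖
  have hμ : 0 < μ := by positivity
  have hμmi : μ ≤ mi := by
    rw [div_le_iff₀ (by linarith)]; nlinarith
  have hspeed : 2 * (R * EE mi mj v vs I Is) = μ * relSpeedPrime mi mj v vs I Is R ^ 2 := by
    have hE := EE_nonneg (v := v) (vs := vs) hmi.le hmj.le hI hIs
    rw [relSpeedPrime, Real.sq_sqrt (by positivity), mul_div_cancel₀ _ hμ.ne']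
    ring
  have hlow : sbar mi mj * relSpeedPrime mi mj v vs I Is R ≤ a + ‖v‖ :=
    (sbar_mul_relSpeedPrime_le hmi hmj hσ hdir).trans (norm_sub_le _ v)
  calc sbar mi mj ^ 2 * (R * EE mi mj v vs I Is)
      = μ * (sbar mi mj * relSpeedPrime mi mj v vs I Is R) ^ 2 / 2 := by
        linear_combination sbar mi mj ^ 2 / 2 * hspeed
    _ ≤ μ * (a + ‖v‖) ^ 2 / 2 := by
        gcongr
        exact mul_nonneg (sbar_pos hmi hmj).le (Real.sqrt_nonneg _)
    _ ≤ μ * (a ^ 2 + ‖v‖ ^ 2) := by nlinarith [sq_nonneg (a - ‖v‖)]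
    _ ≤ mi * (a ^ 2 + ‖v‖ ^ 2) := by gcongr

theorem Iprime_nonneg (hmi : 0 ≤ mi) (hmj : 0 ≤ mj) (hI : 0 ≤ I) (hIs : 0 ≤ Is)
    (hr : 0 ≤ r) (hR : R ≤ 1) : 0 ≤ Iprime mi mj v vs I Is r R :=
  mul_nonneg (mul_nonneg hr (by linarith)) (EE_nonneg hmi hmj hI hIs)

theorem sbar_sq_mul_mul_EE_le (hmi : 0 < mi) (hmj : 0 < mj) (hI : 0 ≤ I) (hIs : 0 ≤ Is)
    (hσ : ‖σ‖ = 1) (hdir : inner ℝ (v - vs) σ ≤ 0) (hr : r ∈ Icc (0 : ℝ) 1)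
    (hR : R ∈ Icc (0 : ℝ) 1) :
    sbar mi mj ^ 2 * r * EE mi mj v vs I Is / 2
      ≤ (mi * ‖vprime mi mj v vs σ I Is R‖ ^ 2 / 2 + Iprime mi mj v vs I Is r R)
        + (mi * ‖v‖ ^ 2 / 2 + I) := by
  have hRE := sbar_sq_mul_R_mul_EE_le hmi hmj hI hIs hσ hdir hR.1
  have hIp := Iprime_nonneg (v := v) (vs := vs) hmi.le hmj.le hI hIs hr.1 hR.2
  have hs : sbar mi mj ^ 2 ≤ 1 := pow_le_one₀ (sbar_pos hmi hmj).le (sbar_le_one hmi hmj.le)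
  have hsplit : r * EE mi mj v vs I Is
      = r * (R * EE mi mj v vs I Is) + Iprime mi mj v vs I Is r R := by
    unfold Iprime; ring
  have hE := EE_nonneg (v := v) (vs := vs) hmi.le hmj.le hI hIs
  have hsRE : 0 ≤ sbar mi mj ^ 2 * (R * EE mi mj v vs I Is) := by
    have := hR.1; positivity
  nlinarith [hsplit, mul_le_mul_of_nonneg_right hs hIp, mul_le_of_le_one_left hsRE hr.2]

theorem EE_div_le_of_inner_nonpos (hmi : 0 < mi) (hmj : 0 < mj) (hmm : 0 < mm)
    (hI : 0 ≤ I) (hIs : 0 ≤ Is) (hσ : ‖σ‖ = 1) (hdir : inner ℝ (v - vs) σ ≤ 0)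
    (hr : r ∈ Ioc (0 : ℝ) 1) (hR : R ∈ Icc (0 : ℝ) 1) :
    EE mi mj v vs I Is / mm
      ≤ (√2 / sbar mi mj * brk mi mm (vprime mi mj v vs σ I Is R) (Iprime mi mj v vs I Is r R)
          * brk mi mm v I) ^ 2 * r⁻¹ := by
  have hbound := div_le_brk_sq_mul_brk_sq hmi.le hmi.le hmm
    (Iprime_nonneg hmi.le hmj.le hI hIs hr.1.le hR.2) hI
    (sbar_sq_mul_mul_EE_le hmi hmj hI hIs hσ hdir (Ioc_subset_Icc_self hr) hR)
  have hs := sbar_pos hmi hmj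
  have hr0 := hr.1
  rw [mul_pow, mul_pow, div_pow, Real.sq_sqrt zero_le_two]
  calc EE mi mj v vs I Is / mm
      = 2 / (sbar mi mj ^ 2 * r) * (sbar mi mj ^ 2 * r * EE mi mj v vs I Is / 2 / mm) := by
        field_simp
    _ ≤ _ := by
        grw [hbound]
        exact le_of_eq (by field_simp)

theorem EE_div_le_brk_mul_brk_sq (hmi : 0 < mi) (hmj : 0 < mj) (hmm : 0 < mm)
    (hI : 0 ≤ I) (hIs : 0 ≤ Is) :
    EE mi mj v vs I Is / mm ≤ (brk mi mm v I * brk mj mm vs Is) ^ 2 := by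
  rw [mul_pow]
  exact div_le_brk_sq_mul_brk_sq hmi.le hmj.le hmm hI hIs (EE_le (by linarith))

end Collision

theorem kernel_distribution_backward_general
    (mi mj mm γ p q : ℝ)
    (hmi : 0 < mi) (hmj : 0 < mj) (hmm : 0 < mm)
    (hγ0 : 0 ≤ γ) (hp : 1 ≤ p) (hq : 1 ≤ q) (hpq : 1 / p + 1 / q = 1)
    (v vs : E3) (I Is : ℝ) (hI : 0 ≤ I) (hIs : 0 ≤ Is)
    (σ : E3) (hσ : ‖σ‖ = 1) (r R : ℝ) (hr : r ∈ Ioc (0 : ℝ) 1) (hR : R ∈ Icc (0 : ℝ) 1)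
    (hdir : (inner ℝ (v - vs) σ : ℝ) ≤ 0) :
    (EE mi mj v vs I Is / mm) ^ (γ / 2)
      ≤ (Real.sqrt 2 / sbar mi mj) ^ (γ / q) * r ^ (-(γ / (2 * q)))
        * brk mi mm (vprime mi mj v vs σ I Is R) (Iprime mi mj v vs I Is r R) ^ (γ / q)
        * brk mi mm v I ^ γ * brk mj mm vs Is ^ (γ / p) := by
  have hX : 0 ≤ EE mi mj v vs I Is / mm := div_nonneg (EE_nonneg hmi.le hmj.le hI hIs) hmm.le
  have hs := (sbar_pos hmi hmj).le
  have hexp : γ / 2 = γ / q / 2 + γ / p / 2 := by linear_combination -(γ / 2) * hpq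
  have hγq : 0 ≤ γ / q := by positivity
  have hγp : 0 ≤ γ / p := by positivity
  calc (EE mi mj v vs I Is / mm) ^ (γ / 2)
      ≤ ((√2 / sbar mi mj * brk mi mm (vprime mi mj v vs σ I Is R) (Iprime mi mj v vs I Is r R)
            * brk mi mm v I) ^ 2 * r⁻¹) ^ (γ / q / 2)
          * ((brk mi mm v I * brk mj mm vs Is) ^ 2) ^ (γ / p / 2) := by
        rw [hexp]
        exact rpow_add_le_mul_rpow hX (EE_div_le_of_inner_nonpos hmi hmj hmm hI hIs hσ hdir hr hR)
          (EE_div_le_brk_mul_brk_sq hmi hmj hmm hI hIs) (by positivity) (by positivity)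
    _ = _ := by
        have hB1 : brk mi mm v I ^ γ = brk mi mm v I ^ (γ / q) * brk mi mm v I ^ (γ / p) := by
          rw [← Real.rpow_add_of_nonneg (brk_nonneg v I) hγq hγp]
          congr 1
          linear_combination -γ * hpq
        rw [Real.mul_rpow (sq_nonneg _) (inv_nonneg.2 hr.1.le), sq_rpow_div_two
            (mul_nonneg (mul_nonneg (by positivity) (brk_nonneg _ _)) (brk_nonneg _ _)),
          sq_rpow_div_two (mul_nonneg (brk_nonneg _ _) (brk_nonneg _ _)),
          Real.mul_rpow (mul_nonneg (by positivity) (brk_nonneg _ _)) (brk_nonneg _ _),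
          Real.mul_rpow (by positivity) (brk_nonneg _ _),
          Real.mul_rpow (brk_nonneg _ _) (brk_nonneg _ _), Real.inv_rpow hr.1.le,
          ← Real.rpow_neg hr.1.le, hB1, show γ / q / 2 = γ / (2 * q) by ring]
        ring

/-- Lemma 4.4 (backward scattering case): distribution of the kernel
`(E/m)^{γ/2}` among the brackets when `û·σ ≤ 0`. -/
theorem kernel_distribution_backward
    (mi mj mm γ p q : ℝ)
    (hmi : 0 < mi) (hmj : 0 < mj) (hmm : 0 < mm)
    (hγ0 : 0 ≤ γ) (hγ2 : γ ≤ 2) (hp : 1 ≤ p) (hq : 1 ≤ q) (hpq : 1 / p + 1 / q = 1)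
    (v vs : E3) (I Is : ℝ) (hI : 0 ≤ I) (hIs : 0 ≤ Is)
    (σ : E3) (hσ : ‖σ‖ = 1) (r R : ℝ) (hr : r ∈ Ioc (0 : ℝ) 1) (hR : R ∈ Icc (0 : ℝ) 1)
    (hdir : (inner ℝ (v - vs) σ : ℝ) ≤ 0) :
    (EE mi mj v vs I Is / mm) ^ (γ / 2)
      ≤ (Real.sqrt 2 / sbar mi mj) ^ (γ / q) * r ^ (-(γ / (2 * q)))
        * brk mi mm (vprime mi mj v vs σ I Is R) (Iprime mi mj v vs I Is r R) ^ (γ / q)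
        * brk mi mm v I ^ γ * brk mj mm vs Is ^ (γ / p) :=
  kernel_distribution_backward_general mi mj mm γ p q hmi hmj hmm hγ0 hp hq hpq v vs I Is hI hIs σ
    hσ r R hr hR hdir
end
end

section
/- Fix v_* ∈ ℝ³, I_* ∈ [0,∞), σ ∈ 𝕊², r ∈ [0,1] and R ∈ [0,1], and define Φ : ℝ³×ℝ → ℝ³×ℝ by Φ(v,I) = (v',I') with v' = V + (m_j/M)√(2RE/μ) σ and I' = r(1−R)E, where V = (m_i v + m_j v_*)/M and E = (μ/2)|v−v_*|² + I + I_*. Then at every point (v,I) with E > 0 the map Φ is differentiable and the absolute value of the determinant of its derivative equals (m_i/M)³ · r(1−R). -/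
open MeasureTheory Real Set
open scoped ENNReal Classical

noncomputable section

/-! The energy `E` is smooth and, as `E(p) > 0`, so is `√(2RE/μ)` near `p`; hence `Φ` is
differentiable and, writing `ℓ = dE_p`, its derivative is
`w ↦ (a • w.1 + κ ℓ(w) • σ, r(1-R) ℓ(w))` with `a = m_i/M` and some scalar `κ`. As
`ℓ(w) = μ⟪v - v_*, w.1⟫ + w.2`, this map factors through two transvections and the diagonal
maps `diag(a, a, a, 1)` and `diag(1, 1, 1, r(1-R))`, so its determinant is `a³ r(1-R)`
whatever `κ` and `σ` are. -/

open Module LinearMap in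
theorem LinearMap.det_eq_pow_finrank_mul_of_apply_eq {R M : Type*} [CommRing R] [AddCommGroup M]
    [Module R M] [Module.Free R M] [Module.Finite R M] {L : Module.End R (M × R)}
    (a κ ρ : R) (g : Dual R M) (σ : M)
    (hL : ∀ w, L w = (a • w.1 + (κ * (g w.1 + w.2)) • σ, ρ * (g w.1 + w.2))) :
    L.det = a ^ finrank R M * ρ := by
  have hfactor : L = prodMap id (ρ • id) ∘ₗ transvection (snd R M R) (κ • σ, 0) ∘ₗ
      prodMap (a • id) id ∘ₗ transvection (g ∘ₗ fst R M R) (0, 1) := by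
    refine LinearMap.ext fun w => ?_
    simp [hL, transvection.apply, smul_smul, mul_comm, add_comm]
  simp [hfactor, det_prodMap, det_smul, mul_comm]

-- No sign condition on `k`: where `k * t < 0` both sides vanish, `√` being `0` on `(-∞, 0]`.
theorem Real.hasDerivAt_sqrt_const_mul (k : ℝ) {t : ℝ} (ht : t ≠ 0) :
    HasDerivAt (fun t => √(k * t)) (k / (2 * √(k * t))) t := by
  rcases eq_or_ne k 0 with rfl | hk
  · simpa using hasDerivAt_const t (0 : ℝ)
  · simpa using ((hasDerivAt_id t).const_mul k).sqrt (mul_ne_zero hk ht)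

open ContinuousLinearMap in
theorem hasFDerivAt_EE (mi mj : ℝ) (vs : E3) (Is : ℝ) (p : E3 × ℝ) :
    HasFDerivAt (fun q : E3 × ℝ => EE mi mj q.1 vs q.2 Is)
      ((mi * mj / (mi + mj)) • (innerSL ℝ (p.1 - vs)).comp (fst ℝ E3 ℝ) +
        snd ℝ E3 ℝ) p := by
  have hnorm := ((fst ℝ E3 ℝ).hasFDerivAt.sub_const vs).norm_sq (x := p)
  refine (((hnorm.const_mul (mi * mj / (mi + mj) / 2)).add (snd ℝ E3 ℝ).hasFDerivAt).add_const
    Is).congr_fderiv ?_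
  ext w <;> simp
  ring

theorem jacobian_change_of_variables_vI_general
    (mi mj : ℝ) (hmi : 0 < mi) (hmj : 0 < mj)
    (vs : E3) (Is : ℝ) (σ : E3)
    (r R : ℝ) (hr : r ∈ Icc (0 : ℝ) 1) (hR : R ∈ Icc (0 : ℝ) 1)
    (Φ : E3 × ℝ → E3 × ℝ)
    (hΦ : Φ = fun p => (vprime mi mj p.1 vs σ p.2 Is R, Iprime mi mj p.1 vs p.2 Is r R))
    (p : E3 × ℝ) (hE : 0 < EE mi mj p.1 vs p.2 Is) :
    DifferentiableAt ℝ Φ p ∧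
      |(fderiv ℝ Φ p).det| = (mi / (mi + mj)) ^ 3 * (r * (1 - R)) := by
  subst hΦ
  set μ := mi * mj / (mi + mj)
  set k := 2 * R / μ
  set dE := μ • (innerSL ℝ (p.1 - vs)).comp (ContinuousLinearMap.fst ℝ E3 ℝ) +
    ContinuousLinearMap.snd ℝ E3 ℝ
  set κ := k / (2 * √(k * EE mi mj p.1 vs p.2 Is))
  have hEE : HasFDerivAt (fun q : E3 × ℝ => EE mi mj q.1 vs q.2 Is) dE p :=
    hasFDerivAt_EE mi mj vs Is p
  have hroot : HasFDerivAt (fun q : E3 × ℝ => √(2 * R * EE mi mj q.1 vs q.2 Is / μ))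
      (κ • dE) p := by
    have hcomp : (fun q : E3 × ℝ => √(2 * R * EE mi mj q.1 vs q.2 Is / μ)) =
        (fun t => √(k * t)) ∘ fun q : E3 × ℝ => EE mi mj q.1 vs q.2 Is := by
      funext q
      simp only [Function.comp_apply, k]
      ring_nf
    rw [hcomp]
    exact (Real.hasDerivAt_sqrt_const_mul k hE.ne').comp_hasFDerivAt p hEE
  have hderiv : HasFDerivAt (fun q : E3 × ℝ =>
      (vprime mi mj q.1 vs σ q.2 Is R, Iprime mi mj q.1 vs q.2 Is r R)) _ p :=
    ((((ContinuousLinearMap.fst ℝ E3 ℝ).hasFDerivAt.const_smul (mi / (mi + mj))).add_const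
      ((mj / (mi + mj)) • vs)).add ((hroot.const_mul (mj / (mi + mj))).smul_const σ)).prodMk
      (hEE.const_mul (r * (1 - R)))
  refine ⟨hderiv.differentiableAt, ?_⟩
  rw [hderiv.fderiv, ContinuousLinearMap.det, LinearMap.det_eq_pow_finrank_mul_of_apply_eq
    (mi / (mi + mj)) (mj / (mi + mj) * κ) (r * (1 - R)) (μ • innerₛₗ ℝ (p.1 - vs)) σ,
    finrank_euclideanSpace_fin]
  · exact abs_of_nonneg (mul_nonneg (by positivity) (mul_nonneg hr.1 (sub_nonneg.2 hR.2)))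
  · intro w
    simp [dE, mul_add, mul_assoc]

/-- Jacobian (4.15): the change of variables `(v,I) ↦ (v',I')` has Jacobian
`(m_i/(m_i+m_j))³ r(1-R)` wherever `E > 0`. -/
theorem jacobian_change_of_variables_vI
    (mi mj : ℝ) (hmi : 0 < mi) (hmj : 0 < mj)
    (vs : E3) (Is : ℝ) (hIs : 0 ≤ Is) (σ : E3) (hσ : ‖σ‖ = 1)
    (r R : ℝ) (hr : r ∈ Icc (0 : ℝ) 1) (hR : R ∈ Icc (0 : ℝ) 1)
    (Φ : E3 × ℝ → E3 × ℝ)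
    (hΦ : Φ = fun p => (vprime mi mj p.1 vs σ p.2 Is R, Iprime mi mj p.1 vs p.2 Is r R))
    (p : E3 × ℝ) (hE : 0 < EE mi mj p.1 vs p.2 Is) :
    DifferentiableAt ℝ Φ p ∧
      |(fderiv ℝ Φ p).det| = (mi / (mi + mj)) ^ 3 * (r * (1 - R)) :=
  jacobian_change_of_variables_vI_general mi mj hmi hmj vs Is σ r R hr hR Φ hΦ p hE
end
end

section
/- Fix v ∈ ℝ³, I ∈ [0,∞), σ ∈ 𝕊², r ∈ [0,1] and R ∈ [0,1], and define Ψ : ℝ³×ℝ → ℝ³×ℝ by Ψ(v_*,I_*) = (v',I') with v' = V + (m_j/M)√(2RE/μ) σ and I' = r(1−R)E, where V = (m_i v + m_j v_*)/M and E = (μ/2)|v−v_*|² + I + I_*. Then at every point (v_*,I_*) with E > 0 the map Ψ is differentiable and the absolute value of the determinant of its derivative equals (m_j/M)³ · r(1−R). -/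
open MeasureTheory Real Set
open scoped ENNReal Classical

noncomputable section

/-!
Where `E > 0` the factor `√E` in `v'` is smooth, so `Ψ` is differentiable and its derivative has
the shape `δ ↦ ((m_j/M) δ_v + (dE δ) u, r(1-R) dE δ)` with `u ∥ σ`, where
`dE δ = μ⟪v_* - v, δ_v⟫ + δ_I`. Such a map is the composite of two transvections (determinant `1`)
and two block-diagonal scalings, so its determinant is `(m_j/M)³ r(1-R)` whatever `u` is.
-/

namespace LinearMap

open Module

variable {R V : Type*} [CommRing R] [AddCommGroup V] [Module R V] [Module.Free R V]
  [Module.Finite R V]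

theorem det_eq_pow_finrank_mul_of_apply_eq_s8 (L : V × R →ₗ[R] V × R) (α c : R)
    (ψ : V × R →ₗ[R] R) (hψ : ψ (0, 1) = 1) (u : V)
    (hL : ∀ z, L z = (α • z.1 + ψ z • u, c * ψ z)) :
    L.det = α ^ finrank R V * c := by
  -- `(x, t) ↦ (x, ψ (x, t)) ↦ (α x, ψ (x, t)) ↦ (α x + ψ (x, t) u, ψ (x, t)) ↦ L (x, t)`
  have hfactor : L = (id.prodMap (c • id)) ∘ₗ transvection (snd R V R) (u, 0) ∘ₗ
      ((α • id).prodMap id) ∘ₗ transvection (ψ - snd R V R) (0, 1) := by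
    ext z <;> simp [hL, transvection.apply, mul_comm]
  rw [hfactor]
  simp [det_prodMap, hψ]
  ring

end LinearMap

open ContinuousLinearMap in
def fderivEE (mi mj : ℝ) (v vs : E3) : E3 × ℝ →L[ℝ] ℝ :=
  (innerSL ℝ ((mi * mj / (mi + mj)) • (vs - v))).comp (fst ℝ E3 ℝ) + snd ℝ E3 ℝ

theorem hasFDerivAt_EE_s8 (mi mj : ℝ) (v : E3) (I : ℝ) (p : E3 × ℝ) :
    HasFDerivAt (fun q : E3 × ℝ => EE mi mj v q.1 I q.2) (fderivEE mi mj v p.1) p := by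
  have h := ((((hasFDerivAt_const v p).sub hasFDerivAt_fst).norm_sq.const_mul
    (mi * mj / (mi + mj) / 2)).add_const I).add hasFDerivAt_snd
  refine h.congr_fderiv (ContinuousLinearMap.ext fun z => ?_)
  simp [fderivEE]
  ring

theorem hasFDerivAt_vprime_Iprime (mi mj : ℝ) (hmi : 0 ≤ mi) (hmj : 0 ≤ mj) (v : E3) (I : ℝ)
    (σ : E3) (r R : ℝ) (hR : 0 ≤ R) (p : E3 × ℝ) (hE : 0 < EE mi mj v p.1 I p.2) :
    HasFDerivAt (fun q : E3 × ℝ => (vprime mi mj v q.1 σ I q.2 R, Iprime mi mj v q.1 I q.2 r R))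
      (((mj / (mi + mj)) • ContinuousLinearMap.fst ℝ E3 ℝ +
          (fderivEE mi mj v p.1).smulRight ((mj / (mi + mj) *
            √(2 * R / (mi * mj / (mi + mj))) / (2 * √(EE mi mj v p.1 I p.2))) • σ)).prod
        ((r * (1 - R)) • fderivEE mi mj v p.1)) p := by
  -- splitting off `√E` spares a separate treatment of `R = 0`
  have hsplit : ∀ q : E3 × ℝ, √(2 * R * EE mi mj v q.1 I q.2 / (mi * mj / (mi + mj)))
      = √(2 * R / (mi * mj / (mi + mj))) * √(EE mi mj v q.1 I q.2) := fun q => by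
    rw [← Real.sqrt_mul (by positivity)]
    ring_nf
  have hfun : (fun q : E3 × ℝ => (vprime mi mj v q.1 σ I q.2 R, Iprime mi mj v q.1 I q.2 r R))
      = fun q => ((mi / (mi + mj)) • v + (mj / (mi + mj)) • q.1
          + (mj / (mi + mj) * √(2 * R / (mi * mj / (mi + mj))) * √(EE mi mj v q.1 I q.2)) • σ,
        r * (1 - R) * EE mi mj v q.1 I q.2) := by
    funext q
    rw [vprime, Iprime, hsplit, ← mul_assoc]
  have hsqrt := (Real.hasDerivAt_sqrt hE.ne').comp_hasFDerivAt p (hasFDerivAt_EE_s8 mi mj v I p)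
  have hv := ((hasFDerivAt_const ((mi / (mi + mj)) • v) p).add
    (hasFDerivAt_fst.const_smul (mj / (mi + mj)))).add
    ((hsqrt.const_mul (mj / (mi + mj) * √(2 * R / (mi * mj / (mi + mj))))).smul_const σ)
  have hI := (hasFDerivAt_EE_s8 mi mj v I p).const_mul (r * (1 - R))
  rw [hfun]
  refine (hv.prodMk hI).congr_fderiv (ContinuousLinearMap.ext fun z => Prod.ext ?_ rfl)
  simp [smul_smul]
  congr 1
  ring

theorem jacobian_change_of_variables_vsIs_general
    (mi mj : ℝ) (hmi : 0 < mi) (hmj : 0 < mj)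
    (v : E3) (I : ℝ) (σ : E3)
    (r R : ℝ) (hr : r ∈ Icc (0 : ℝ) 1) (hR : R ∈ Icc (0 : ℝ) 1)
    (Ψ : E3 × ℝ → E3 × ℝ)
    (hΨ : Ψ = fun p => (vprime mi mj v p.1 σ I p.2 R, Iprime mi mj v p.1 I p.2 r R))
    (p : E3 × ℝ) (hE : 0 < EE mi mj v p.1 I p.2) :
    DifferentiableAt ℝ Ψ p ∧
      |(fderiv ℝ Ψ p).det| = (mj / (mi + mj)) ^ 3 * (r * (1 - R)) := by
  subst hΨ
  have hD := hasFDerivAt_vprime_Iprime mi mj hmi.le hmj.le v I σ r R hR.1 p hE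
  refine ⟨hD.differentiableAt, ?_⟩
  rw [hD.fderiv, ContinuousLinearMap.det, LinearMap.det_eq_pow_finrank_mul_of_apply_eq_s8 _ _ _
    (fderivEE mi mj v p.1) (by simp [fderivEE]) _ fun z => rfl, finrank_euclideanSpace_fin]
  exact abs_of_nonneg (mul_nonneg (by positivity) (mul_nonneg hr.1 (sub_nonneg.2 hR.2)))

/-- Jacobian (4.20): the change of variables `(v_*,I_*) ↦ (v',I')` has Jacobian
`(m_j/(m_i+m_j))³ r(1-R)` wherever `E > 0`. -/
theorem jacobian_change_of_variables_vsIs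
    (mi mj : ℝ) (hmi : 0 < mi) (hmj : 0 < mj)
    (v : E3) (I : ℝ) (hI : 0 ≤ I) (σ : E3) (hσ : ‖σ‖ = 1)
    (r R : ℝ) (hr : r ∈ Icc (0 : ℝ) 1) (hR : R ∈ Icc (0 : ℝ) 1)
    (Ψ : E3 × ℝ → E3 × ℝ)
    (hΨ : Ψ = fun p => (vprime mi mj v p.1 σ I p.2 R, Iprime mi mj v p.1 I p.2 r R))
    (p : E3 × ℝ) (hE : 0 < EE mi mj v p.1 I p.2) :
    DifferentiableAt ℝ Ψ p ∧
      |(fderiv ℝ Ψ p).det| = (mj / (mi + mj)) ^ 3 * (r * (1 - R)) :=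
  jacobian_change_of_variables_vsIs_general mi mj hmi hmj v I σ r R hr hR Ψ hΨ p hE
end
end

section
/- For every a ∈ [0,1] and every measurable function b : [0,1] → [0,∞], one has ∫_{[a,1)} b( (y−a)/√(1 + a² − 2ay) ) dy ≤ √2 · ∫_{[0,1]} b(x) dx. (For y ∈ [a,1) with a ∈ [0,1] one has 1 + a² − 2ay > 0 and (y−a)/√(1+a²−2ay) ∈ [0,1], so the integrand is well defined.) -/
open MeasureTheory Real Set
open scoped ENNReal Classical

noncomputable section

/-!
The map `φ_a(y) = (y - a)/√(1 + a² - 2ay)` sends `[a,1)` into `[0,1]` and has derivative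
`(1 - ay)/(1 + a² - 2ay)^{3/2} ≥ 1` there, since `0 < 1 + a² - 2ay ≤ 1 - ay ≤ 1`.
A map that expands lengths can only shrink the integral of `b ∘ φ_a` compared with that of `b`
over the image, so the estimate even holds with constant `1 ≤ √2`.
-/

theorem setLIntegral_comp_le_of_one_le_deriv {s t : Set ℝ} {f f' : ℝ → ℝ}
    (hs : Convex ℝ s) (hf : ∀ x ∈ s, HasDerivWithinAt f (f' x) s x)
    (hf' : ∀ x ∈ s, 1 ≤ f' x) (hst : MapsTo f s t) (g : ℝ → ℝ≥0∞) :
    ∫⁻ x in s, g (f x) ≤ ∫⁻ y in t, g y := by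
  have hmono : StrictMonoOn f s :=
    strictMonoOn_of_hasDerivWithinAt_pos hs (HasDerivWithinAt.continuousOn hf)
      (fun x hx => (hf x (interior_subset hx)).mono interior_subset)
      (fun x hx => one_pos.trans_le (hf' x (interior_subset hx)))
  calc ∫⁻ x in s, g (f x)
      ≤ ∫⁻ x in s, ENNReal.ofReal |f' x| * g (f x) := by
        refine setLIntegral_mono' hs.ordConnected.measurableSet fun x hx => ?_
        refine le_mul_of_one_le_left zero_le ?_
        rw [← ENNReal.ofReal_one]
        exact ENNReal.ofReal_le_ofReal ((hf' x hx).trans (le_abs_self _))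
    _ = ∫⁻ y in f '' s, g y :=
        (lintegral_image_eq_lintegral_abs_deriv_mul hs.ordConnected.measurableSet hf
          hmono.injOn g).symm
    _ ≤ ∫⁻ y in t, g y := lintegral_mono_set hst.image_subset

section AngularMap

variable {a y : ℝ}

def angularMap (a y : ℝ) : ℝ := (y - a) / √(1 + a ^ 2 - 2 * a * y)

theorem one_add_sq_sub_two_mul_pos (hy₀ : 0 ≤ y) (hy₁ : y < 1) :
    0 < 1 + a ^ 2 - 2 * a * y := by
  nlinarith [sq_nonneg (a - y)]

theorem hasDerivAt_angularMap (hD : 0 < 1 + a ^ 2 - 2 * a * y) :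
    HasDerivAt (angularMap a) ((1 - a * y) / √(1 + a ^ 2 - 2 * a * y) ^ 3) y := by
  have hsqrt := (((hasDerivAt_id' y).const_mul (2 * a)).const_sub (1 + a ^ 2)).sqrt hD.ne'
  refine (((hasDerivAt_id' y).sub_const a).div hsqrt (Real.sqrt_pos.2 hD).ne').congr_deriv ?_
  have hsq := Real.sq_sqrt hD.le
  set r := √(1 + a ^ 2 - 2 * a * y)
  have hr : r ≠ 0 := (Real.sqrt_pos.2 hD).ne'
  field_simp
  linear_combination hsq

theorem one_le_deriv_angularMap (ha : 0 ≤ a) (hay : a ≤ y) (hD : 0 < 1 + a ^ 2 - 2 * a * y) :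
    1 ≤ (1 - a * y) / √(1 + a ^ 2 - 2 * a * y) ^ 3 := by
  have hsq := Real.sq_sqrt hD.le
  set r := √(1 + a ^ 2 - 2 * a * y)
  have hr : 0 < r := Real.sqrt_pos.2 hD
  have hr1 : r ≤ 1 := by nlinarith
  rw [one_le_div (by positivity)]
  calc r ^ 3 = r ^ 2 * r := by ring
    _ ≤ r ^ 2 := mul_le_of_le_one_right (sq_nonneg r) hr1
    _ ≤ 1 - a * y := by nlinarith

theorem mapsTo_angularMap (ha : 0 ≤ a) : MapsTo (angularMap a) (Ico a 1) (Icc 0 1) := by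
  rintro y ⟨hay, hy1⟩
  have hD := one_add_sq_sub_two_mul_pos (a := a) (ha.trans hay) hy1
  have hsq := Real.sq_sqrt hD.le
  have hr : 0 < √(1 + a ^ 2 - 2 * a * y) := Real.sqrt_pos.2 hD
  refine ⟨div_nonneg (sub_nonneg.2 hay) hr.le, (div_le_one hr).2 ?_⟩
  nlinarith

end AngularMap

theorem angular_change_of_variables_bound_general
    (a : ℝ) (ha : a ∈ Icc (0 : ℝ) 1) (b : ℝ → ℝ≥0∞) :
    (∫⁻ y in Ico a 1, b ((y - a) / Real.sqrt (1 + a ^ 2 - 2 * a * y)))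
      ≤ ENNReal.ofReal (Real.sqrt 2) * ∫⁻ x in Icc (0 : ℝ) 1, b x := by
  have hD : ∀ y ∈ Ico a 1, 0 < 1 + a ^ 2 - 2 * a * y := fun y hy =>
    one_add_sq_sub_two_mul_pos (ha.1.trans hy.1) hy.2
  have hle : ∫⁻ y in Ico a 1, b (angularMap a y) ≤ ∫⁻ x in Icc (0 : ℝ) 1, b x :=
    setLIntegral_comp_le_of_one_le_deriv (convex_Ico a 1)
      (fun y hy => (hasDerivAt_angularMap (hD y hy)).hasDerivWithinAt)
      (fun y hy => one_le_deriv_angularMap ha.1 hy.1 (hD y hy)) (mapsTo_angularMap ha.1) b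
  have hsqrt2 : (1 : ℝ≥0∞) ≤ ENNReal.ofReal √2 := by
    rw [← ENNReal.ofReal_one]
    exact ENNReal.ofReal_le_ofReal (Real.one_le_sqrt.2 one_le_two)
  exact hle.trans (le_mul_of_one_le_left zero_le hsqrt2)

/-- One-dimensional change of variables estimate: the Jacobian of
`y ↦ (y-a)/√(1+a²-2ay)` is bounded by `√2`. -/
theorem angular_change_of_variables_bound
    (a : ℝ) (ha : a ∈ Icc (0 : ℝ) 1) (b : ℝ → ℝ≥0∞) (hb : Measurable b) :
    (∫⁻ y in Ico a 1, b ((y - a) / Real.sqrt (1 + a ^ 2 - 2 * a * y)))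
      ≤ ENNReal.ofReal (Real.sqrt 2) * ∫⁻ x in Icc (0 : ℝ) 1, b x :=
  angular_change_of_variables_bound_general a ha b
end
end

section
/- Let g : ℝ³×[0,∞) → [0,∞) be measurable, let β ≥ 0, ℓ ≥ 0 and K > 1. Then ∫_{ℝ³×[0,∞)} g(v,I) ⟨v,I⟩_j^{β} · 1_{{g(v,I)⟨v,I⟩_j^{ℓ} ≥ K}} dv dI ≤ (log K)^{−1/(β+1)} · ( ∫_{ℝ³×[0,∞)} g(v,I) ⟨v,I⟩_j^{β+1} dv dI )^{β/(β+1)} · ( ∫_{ℝ³×[0,∞)} g(v,I) |log( g(v,I) ⟨v,I⟩_j^{ℓ} )| dv dI )^{1/(β+1)}. -/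
open MeasureTheory Real Set
open scoped ENNReal Classical

noncomputable section

/-! On the set where `g w^ℓ ≥ K` one has `log (g w^ℓ) ≥ log K > 0`, so there
`g ≤ g |log (g w^ℓ)| / log K`. Writing `g w^β = (g w^(β+1))^(β/(β+1)) · g^(1/(β+1))` and
bounding the second factor this way, Hölder's inequality with the exponents `β/(β+1)` and
`1/(β+1)` gives the estimate. -/

lemma mul_rpow_eq_rpow_succ_mul_rpow {g b β : ℝ} (hg : 0 < g) (hb : 0 ≤ b) (hβ : 0 ≤ β) :
    (g * b ^ (β + 1)) ^ (β / (β + 1)) * g ^ (1 / (β + 1)) = g * b ^ β := by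
  have hβ1 : β + 1 ≠ 0 := by positivity
  rw [Real.mul_rpow hg.le (Real.rpow_nonneg hb _), ← Real.rpow_mul hb, mul_right_comm,
    ← Real.rpow_add hg, ← add_div, div_self hβ1, Real.rpow_one,
    mul_div_cancel₀ _ hβ1]

lemma pos_of_le_mul_rpow {g b ℓ K : ℝ} (hb : 0 ≤ b) (hK : 0 < K) (h : K ≤ g * b ^ ℓ) :
    0 < g :=
  pos_of_mul_pos_left (hK.trans_le h) (Real.rpow_nonneg hb ℓ)

lemma le_inv_log_mul_mul_abs_log {g b ℓ K : ℝ} (hb : 0 ≤ b) (hK : 1 < K)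
    (h : K ≤ g * b ^ ℓ) :
    g ≤ (Real.log K)⁻¹ * (g * |Real.log (g * b ^ ℓ)|) := by
  have hlogK : 0 < Real.log K := Real.log_pos hK
  have hlog : Real.log K ≤ |Real.log (g * b ^ ℓ)| :=
    (Real.log_le_log (by linarith) h).trans (le_abs_self _)
  rw [inv_mul_eq_div, le_div_iff₀ hlogK]
  exact mul_le_mul_of_nonneg_left hlog (pos_of_le_mul_rpow hb (by linarith) h).le

lemma mul_rpow_le_of_le_mul_rpow {g b β ℓ K : ℝ} (hb : 0 ≤ b) (hβ : 0 ≤ β) (hK : 1 < K)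
    (h : K ≤ g * b ^ ℓ) :
    g * b ^ β ≤ (g * b ^ (β + 1)) ^ (β / (β + 1)) *
      ((Real.log K)⁻¹ * (g * |Real.log (g * b ^ ℓ)|)) ^ (1 / (β + 1)) := by
  have hg : 0 < g := pos_of_le_mul_rpow hb (by linarith) h
  rw [← mul_rpow_eq_rpow_succ_mul_rpow hg hb hβ]
  gcongr
  exact le_inv_log_mul_mul_abs_log hb hK h

lemma ofReal_ite_le_rpow_mul_rpow {g b β ℓ K : ℝ} (hb : 0 ≤ b) (hβ : 0 ≤ β) (hK : 1 < K) :
    ENNReal.ofReal (if K ≤ g * b ^ ℓ then g * b ^ β else 0)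
      ≤ ENNReal.ofReal (g * b ^ (β + 1)) ^ (β / (β + 1)) *
        ENNReal.ofReal ((Real.log K)⁻¹ * (g * |Real.log (g * b ^ ℓ)|)) ^ (1 / (β + 1)) := by
  split_ifs with h
  · have hg : 0 < g := pos_of_le_mul_rpow hb (by linarith) h
    have hβ1 : 0 < β + 1 := by positivity
    have hlogK : 0 < Real.log K := Real.log_pos hK
    rw [ENNReal.ofReal_rpow_of_nonneg (by positivity) (by positivity),
      ENNReal.ofReal_rpow_of_nonneg (by positivity) (by positivity),
      ← ENNReal.ofReal_mul (by positivity)]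
    exact ENNReal.ofReal_le_ofReal (mul_rpow_le_of_le_mul_rpow hb hβ hK h)
  · simp

theorem lintegral_tail_le_entropy {α : Type*} [MeasurableSpace α] (μ : Measure α)
    {g w : α → ℝ} (hg : Measurable g) (hw : Measurable w) (hw0 : ∀ x, 0 ≤ w x)
    {β ℓ K : ℝ} (hβ : 0 ≤ β) (hK : 1 < K) :
    ∫⁻ x, ENNReal.ofReal (if K ≤ g x * w x ^ ℓ then g x * w x ^ β else 0) ∂μ
      ≤ ENNReal.ofReal (Real.log K ^ (-(1 / (β + 1))))
        * (∫⁻ x, ENNReal.ofReal (g x * w x ^ (β + 1)) ∂μ) ^ (β / (β + 1))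
        * (∫⁻ x, ENNReal.ofReal (g x * |Real.log (g x * w x ^ ℓ)|) ∂μ) ^ (1 / (β + 1)) := by
  have hβ1 : 0 < β + 1 := by positivity
  have hlogK : 0 < Real.log K := Real.log_pos hK
  have hexp : β / (β + 1) + 1 / (β + 1) = 1 := by field_simp
  have hconst : ENNReal.ofReal (Real.log K)⁻¹ ^ (1 / (β + 1))
      = ENNReal.ofReal (Real.log K ^ (-(1 / (β + 1)))) := by
    rw [ENNReal.ofReal_rpow_of_nonneg (by positivity) (by positivity),
      Real.inv_rpow hlogK.le, Real.rpow_neg hlogK.le]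
  calc ∫⁻ x, ENNReal.ofReal (if K ≤ g x * w x ^ ℓ then g x * w x ^ β else 0) ∂μ
      ≤ ∫⁻ x, ENNReal.ofReal (g x * w x ^ (β + 1)) ^ (β / (β + 1)) *
          ENNReal.ofReal ((Real.log K)⁻¹ * (g x * |Real.log (g x * w x ^ ℓ)|))
            ^ (1 / (β + 1)) ∂μ :=
        lintegral_mono fun x => ofReal_ite_le_rpow_mul_rpow (hw0 x) hβ hK
    _ ≤ (∫⁻ x, ENNReal.ofReal (g x * w x ^ (β + 1)) ∂μ) ^ (β / (β + 1)) *
          (∫⁻ x, ENNReal.ofReal ((Real.log K)⁻¹ * (g x * |Real.log (g x * w x ^ ℓ)|)) ∂μ)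
            ^ (1 / (β + 1)) :=
        ENNReal.lintegral_mul_norm_pow_le (by fun_prop) (by fun_prop) (by positivity)
          (by positivity) hexp
    _ = _ := by
        simp_rw [ENNReal.ofReal_mul (inv_nonneg.mpr hlogK.le)]
        rw [lintegral_const_mul' _ _ ENNReal.ofReal_ne_top,
          ENNReal.mul_rpow_of_nonneg _ _ (by positivity), hconst]
        ring

theorem weighted_tail_entropy_estimate_general
    (mj mm β ℓ K : ℝ)
    (hβ : 0 ≤ β) (hK : 1 < K)
    (g : E3 × ℝ → ℝ) (hg : Measurable g) :
    (∫⁻ x in regionVI, ENNReal.ofReal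
        (if K ≤ g x * brk mj mm x.1 x.2 ^ ℓ then g x * brk mj mm x.1 x.2 ^ β else 0))
      ≤ ENNReal.ofReal (Real.log K ^ (-(1 / (β + 1))))
        * (∫⁻ x in regionVI, ENNReal.ofReal (g x * brk mj mm x.1 x.2 ^ (β + 1)))
            ^ (β / (β + 1))
        * (∫⁻ x in regionVI, ENNReal.ofReal
            (g x * |Real.log (g x * brk mj mm x.1 x.2 ^ ℓ)|)) ^ (1 / (β + 1)) :=
  lintegral_tail_le_entropy _ hg (by fun_prop) (fun _ => Real.sqrt_nonneg _) hβ hK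

/-- Estimate (7.9): entropy control of the weighted mass of the region where
`g⟨·⟩^ℓ ≥ K`. -/
theorem weighted_tail_entropy_estimate
    (mj mm β ℓ K : ℝ) (hmj : 0 < mj) (hmm : 0 < mm)
    (hβ : 0 ≤ β) (hℓ : 0 ≤ ℓ) (hK : 1 < K)
    (g : E3 × ℝ → ℝ) (hg : Measurable g) (hg0 : ∀ x, 0 ≤ g x) :
    (∫⁻ x in regionVI, ENNReal.ofReal
        (if K ≤ g x * brk mj mm x.1 x.2 ^ ℓ then g x * brk mj mm x.1 x.2 ^ β else 0))
      ≤ ENNReal.ofReal (Real.log K ^ (-(1 / (β + 1))))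
        * (∫⁻ x in regionVI, ENNReal.ofReal (g x * brk mj mm x.1 x.2 ^ (β + 1)))
            ^ (β / (β + 1))
        * (∫⁻ x in regionVI, ENNReal.ofReal
            (g x * |Real.log (g x * brk mj mm x.1 x.2 ^ ℓ)|)) ^ (1 / (β + 1)) :=
  weighted_tail_entropy_estimate_general mj mm β ℓ K hβ hK g hg
end
end

section
/- Let a, b, c, x be nonnegative real numbers with a + c > 0. Then max{ b·x − a , c } ≥ (c/2)·(1 + b·x/(a+c)) ≥ (c/2)·min{1, b/(a+c)}·(1 + x). -/
open MeasureTheory Real Set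
open scoped ENNReal Classical

noncomputable section

theorem min_one_mul_one_add_le (s : ℝ) {x : ℝ} (hx : 0 ≤ x) :
    min 1 s * (1 + x) ≤ 1 + s * x :=
  calc min 1 s * (1 + x) = min 1 s + min 1 s * x := by ring
    _ ≤ 1 + s * x :=
      add_le_add (min_le_left 1 s) (mul_le_mul_of_nonneg_right (min_le_right 1 s) hx)

/- With `t = y / (a + c)`: for `t ≤ 1` the bound `c` wins, and for `t > 1` we have
`y - a = c t + a (t - 1) ≥ c t ≥ c (1 + t) / 2`. -/
theorem half_mul_one_add_div_le_max {a c : ℝ} (ha : 0 ≤ a) (hc : 0 ≤ c) (y : ℝ) :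
    c / 2 * (1 + y / (a + c)) ≤ max (y - a) c := by
  rcases le_or_gt (y / (a + c)) 1 with ht | ht
  · exact le_max_of_le_right (by nlinarith)
  · have hac : 0 < a + c := by
      refine (add_nonneg ha hc).lt_of_ne fun h => ?_
      rw [← h, div_zero] at ht
      linarith
    have hy : (a + c) * (y / (a + c)) = y := mul_div_cancel₀ y hac.ne'
    exact le_max_of_le_left (by nlinarith)

theorem max_lower_bound_estimate_general
    (a b c x : ℝ) (ha : 0 ≤ a) (hc : 0 ≤ c) (hx : 0 ≤ x) :
    c / 2 * (1 + b * x / (a + c)) ≤ max (b * x - a) c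
    ∧ c / 2 * min 1 (b / (a + c)) * (1 + x) ≤ c / 2 * (1 + b * x / (a + c)) := by
  refine ⟨half_mul_one_add_div_le_max ha hc (b * x), ?_⟩
  rw [mul_assoc, mul_div_right_comm]
  exact mul_le_mul_of_nonneg_left (min_one_mul_one_add_le _ hx) (by positivity)

/-- Elementary pointwise estimate: `max{bx − a, c} ≥ (c/2)(1 + bx/(a+c)) ≥
(c/2) min{1, b/(a+c)} (1+x)` for nonnegative `a,b,c,x` with `a + c > 0`. -/
theorem max_lower_bound_estimate
    (a b c x : ℝ) (ha : 0 ≤ a) (hb : 0 ≤ b) (hc : 0 ≤ c) (hx : 0 ≤ x)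
    (hac : 0 < a + c) :
    c / 2 * (1 + b * x / (a + c)) ≤ max (b * x - a) c
    ∧ c / 2 * min 1 (b / (a + c)) * (1 + x) ≤ c / 2 * (1 + b * x / (a + c)) :=
  max_lower_bound_estimate_general a b c x ha hc hx
end
end
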